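/- Assume γ₂ > 0, γ₁ ≠ γ₂, and let Λ₁(t) denote the largest real root of φ(t,·) for large t (so Λ₁(t) → γ₂d₂ as t → ∞). Then the ratio of multiplier symbols along Λ₁ diverges: m¹²(t,Λ₁(t))/m¹¹(t,Λ₁(t)) = (g + γ₂·Λ₁(t) − Λ₁(t)²·t/tanh(t·d₂)) / (−Λ₁(t)·(γ₂d₂ − Λ₁(t))·t/sinh(t·d₂)) tends to +∞ as t → ∞ if γ₂ > γ₁, and tends to −∞ as t → ∞ if γ₂ < γ₁. -/

import Mathlib

open Real Filter Asymptotics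

/-- The coefficient `A(t)` of the dispersion cubic. -/
noncomputable def funA (d₁ d₂ γ₁ γ₂ t : ℝ) : ℝ :=
  -(1 / t) * (γ₂ * (t * d₂ + Real.sinh (t * d₂) * Real.cosh (t * d₁) / Real.cosh (t * (d₁ + d₂)))
    + γ₁ * Real.sinh (t * d₁) * Real.cosh (t * d₂) / Real.cosh (t * (d₁ + d₂)))

/-- The coefficient `B(t)` of the dispersion cubic. -/
noncomputable def funB (d₁ d₂ g γ₁ γ₂ t : ℝ) : ℝ :=
  Real.tanh (t * (d₁ + d₂)) * ((γ₂ ^ 2 * d₂ - g) / t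
    + γ₂ * (γ₁ - γ₂) * Real.sinh (t * d₁) * Real.sinh (t * d₂) /
        (t ^ 2 * Real.sinh (t * (d₁ + d₂))))

/-- The coefficient `C(t)` of the dispersion cubic. -/
noncomputable def funC (d₁ d₂ g γ₁ γ₂ t : ℝ) : ℝ :=
  (g * Real.tanh (t * (d₁ + d₂)) / t ^ 2) *
    ((γ₁ - γ₂) * Real.sinh (t * d₁) * Real.sinh (t * d₂) / Real.sinh (t * (d₁ + d₂))
      + γ₂ * d₂ * t)

/-- The dispersion cubic `φ(t,Λ)`. -/
noncomputable def phi (d₁ d₂ g γ₁ γ₂ t Λ : ℝ) : ℝ :=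
  Λ ^ 3 + funA d₁ d₂ γ₁ γ₂ t * Λ ^ 2 + funB d₁ d₂ g γ₁ γ₂ t * Λ + funC d₁ d₂ g γ₁ γ₂ t

/-- The multiplier symbol `m¹¹(t,Λ)`. -/
noncomputable def m11 (d₂ γ₂ t Λ : ℝ) : ℝ := -2 * Λ * (γ₂ * d₂ - Λ) * t / Real.sinh (t * d₂)

/-- The multiplier symbol `m¹²(t,Λ)`. -/
noncomputable def m12 (d₂ g γ₂ t Λ : ℝ) : ℝ :=
  2 * (g + γ₂ * Λ - Λ ^ 2 * t / Real.tanh (t * d₂))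

/-- The multiplier symbol `m²¹(t,Λ)`. -/
noncomputable def m21 (d₁ d₂ γ₁ γ₂ t Λ : ℝ) : ℝ :=
  γ₂ - γ₁ + (Λ - γ₂ * d₂) * (t / Real.tanh (t * d₁) + t / Real.tanh (t * d₂))

/-- The multiplier symbol `m²²(t,Λ)`. -/
noncomputable def m22 (d₂ t Λ : ℝ) : ℝ := -Λ * t / Real.sinh (t * d₂)

/-!
At `Λ = γ₂d₂` every hyperbolic quotient in the coefficients of the cubic tends to `1/2`, and
`t·Λ³` cancels the divergent part `−γ₂d₂·t·Λ²` of `t·A(t)·Λ²`, so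
`t·φ(t, γ₂d₂) → (γ₂ − γ₁)(γ₂d₂)²/2`. Dividing by the two other factors
`(γ₂d₂ − Λ₂)(γ₂d₂ − Λ₃) → (γ₂d₂)²` of `φ(t, γ₂d₂)` gives `t·(γ₂d₂ − Λ₁(t)) → (γ₂ − γ₁)/2`.
Hence `m¹¹ ≈ −γ₂d₂(γ₂ − γ₁)/sinh(td₂)` while `m¹² ≈ −2(γ₂d₂)²·t`, and the ratio behaves like
`2γ₂d₂/(γ₂ − γ₁) · t·sinh(td₂)`.
-/

open Topology

namespace Real

lemma sinh_div_exp (x : ℝ) : sinh x / exp x = (1 - exp (-x) ^ 2) / 2 := by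
  rw [sinh_eq, exp_neg]; field_simp

lemma cosh_div_exp (x : ℝ) : cosh x / exp x = (1 + exp (-x) ^ 2) / 2 := by
  rw [cosh_eq, exp_neg]; field_simp

lemma tendsto_sinh_div_exp_atTop : Tendsto (fun x => sinh x / exp x) atTop (𝓝 (1 / 2)) := by
  simp only [sinh_div_exp]
  simpa using ((tendsto_exp_neg_atTop_nhds_zero.pow 2).const_sub 1).div_const 2

lemma tendsto_cosh_div_exp_atTop : Tendsto (fun x => cosh x / exp x) atTop (𝓝 (1 / 2)) := by
  simp only [cosh_div_exp]
  simpa using ((tendsto_exp_neg_atTop_nhds_zero.pow 2).const_add 1).div_const 2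

lemma tendsto_tanh_atTop : Tendsto tanh atTop (𝓝 1) := by
  have h := tendsto_sinh_div_exp_atTop.div tendsto_cosh_div_exp_atTop (by norm_num)
  rw [div_self (by norm_num)] at h
  refine h.congr fun x => ?_
  rw [Pi.div_apply, tanh_eq_sinh_div_cosh, div_div_div_cancel_right₀ (exp_ne_zero x)]

lemma tendsto_sinh_atTop : Tendsto sinh atTop atTop :=
  (tendsto_sinh_div_exp_atTop.pos_mul_atTop (by norm_num) tendsto_exp_atTop).congr
    fun x => div_mul_cancel₀ _ (exp_ne_zero x)

lemma tendsto_comp_mul_mul_div_of_div_exp {f h k : ℝ → ℝ} {α β γ a b : ℝ}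
    (hf : Tendsto (fun x => f x / exp x) atTop (𝓝 α))
    (hh : Tendsto (fun x => h x / exp x) atTop (𝓝 β))
    (hk : Tendsto (fun x => k x / exp x) atTop (𝓝 γ)) (hγ : γ ≠ 0) (ha : 0 < a) (hb : 0 < b) :
    Tendsto (fun t => f (t * a) * h (t * b) / k (t * (a + b))) atTop (𝓝 (α * β / γ)) := by
  have hlin : ∀ {c : ℝ}, 0 < c → Tendsto (fun t : ℝ => t * c) atTop atTop :=
    fun hc => tendsto_id.atTop_mul_const hc
  refine ((hf.comp (hlin ha)).mul (hh.comp (hlin hb))).div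
    (hk.comp (hlin (add_pos ha hb))) hγ |>.congr fun t => ?_
  simp only [Pi.div_apply, Function.comp_apply, mul_add, exp_add]
  field_simp

lemma tendsto_tanh_mul_atTop {c : ℝ} (hc : 0 < c) :
    Tendsto (fun t => tanh (t * c)) atTop (𝓝 1) :=
  tendsto_tanh_atTop.comp (tendsto_id.atTop_mul_const hc)

end Real

section Dispersion

variable {d₁ d₂ : ℝ} (g γ₁ γ₂ : ℝ)

lemma tendsto_sinh_mul_cosh_div_cosh (hd₁ : 0 < d₁) (hd₂ : 0 < d₂) :
    Tendsto (fun t => sinh (t * d₁) * cosh (t * d₂) / cosh (t * (d₁ + d₂))) atTop (𝓝 (1 / 2)) := by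
  simpa using tendsto_comp_mul_mul_div_of_div_exp tendsto_sinh_div_exp_atTop
    tendsto_cosh_div_exp_atTop tendsto_cosh_div_exp_atTop (by norm_num) hd₁ hd₂

lemma tendsto_sinh_mul_sinh_div_sinh (hd₁ : 0 < d₁) (hd₂ : 0 < d₂) :
    Tendsto (fun t => sinh (t * d₁) * sinh (t * d₂) / sinh (t * (d₁ + d₂))) atTop (𝓝 (1 / 2)) := by
  simpa using tendsto_comp_mul_mul_div_of_div_exp tendsto_sinh_div_exp_atTop
    tendsto_sinh_div_exp_atTop tendsto_sinh_div_exp_atTop (by norm_num) hd₁ hd₂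

lemma tendsto_mul_funA_add (hd₁ : 0 < d₁) (hd₂ : 0 < d₂) :
    Tendsto (fun t => t * funA d₁ d₂ γ₁ γ₂ t + γ₂ * d₂ * t) atTop (𝓝 (-(γ₂ + γ₁) / 2)) := by
  have hP₁ := tendsto_sinh_mul_cosh_div_cosh hd₂ hd₁
  rw [add_comm d₂ d₁] at hP₁
  have hP₂ := tendsto_sinh_mul_cosh_div_cosh hd₁ hd₂
  have hlim := ((hP₁.const_mul γ₂).add (hP₂.const_mul γ₁)).neg
  refine (hlim.congr' ?_).trans (by ring_nf; rfl)
  filter_upwards [eventually_ne_atTop 0] with t ht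
  simp only [funA]
  field_simp
  ring

lemma tendsto_mul_funB (hd₁ : 0 < d₁) (hd₂ : 0 < d₂) :
    Tendsto (fun t => t * funB d₁ d₂ g γ₁ γ₂ t) atTop (𝓝 (γ₂ ^ 2 * d₂ - g)) := by
  have hS := (tendsto_sinh_mul_sinh_div_sinh hd₁ hd₂).div_atTop tendsto_id
  have hlim := (tendsto_tanh_mul_atTop (add_pos hd₁ hd₂)).mul
    ((hS.const_mul (γ₂ * (γ₁ - γ₂))).const_add (γ₂ ^ 2 * d₂ - g))
  rw [mul_zero, add_zero, one_mul] at hlim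
  refine hlim.congr' ?_
  filter_upwards [eventually_ne_atTop 0] with t ht
  simp only [funB, id]
  field_simp

lemma tendsto_mul_funC (hd₁ : 0 < d₁) (hd₂ : 0 < d₂) :
    Tendsto (fun t => t * funC d₁ d₂ g γ₁ γ₂ t) atTop (𝓝 (g * (γ₂ * d₂))) := by
  have hS := (tendsto_sinh_mul_sinh_div_sinh hd₁ hd₂).div_atTop tendsto_id
  have hlim := ((tendsto_tanh_mul_atTop (add_pos hd₁ hd₂)).const_mul g).mul
    ((hS.const_mul (γ₁ - γ₂)).add_const (γ₂ * d₂))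
  rw [mul_zero, zero_add, mul_one] at hlim
  refine hlim.congr' ?_
  filter_upwards [eventually_ne_atTop 0] with t ht
  simp only [funC, id]
  field_simp

lemma tendsto_mul_phi (hd₁ : 0 < d₁) (hd₂ : 0 < d₂) :
    Tendsto (fun t => t * phi d₁ d₂ g γ₁ γ₂ t (γ₂ * d₂)) atTop
      (𝓝 ((γ₂ - γ₁) * (γ₂ * d₂) ^ 2 / 2)) := by
  have hlim := (((tendsto_mul_funA_add γ₁ γ₂ hd₁ hd₂).mul_const ((γ₂ * d₂) ^ 2)).add
    ((tendsto_mul_funB g γ₁ γ₂ hd₁ hd₂).mul_const (γ₂ * d₂))).add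
    (tendsto_mul_funC g γ₁ γ₂ hd₁ hd₂)
  refine (hlim.congr fun t => ?_).trans (by ring_nf; rfl)
  simp only [phi]
  ring

end Dispersion

lemma tendsto_mul_sub_of_eq_mul_mul {f Λ₁ Λ₂ Λ₃ : ℝ → ℝ} {L μ₂ μ₃ c : ℝ}
    (hf : ∀ᶠ t in atTop, f t = (L - Λ₁ t) * (L - Λ₂ t) * (L - Λ₃ t))
    (hc : Tendsto (fun t => t * f t) atTop (𝓝 c))
    (h₂ : Tendsto Λ₂ atTop (𝓝 μ₂)) (h₃ : Tendsto Λ₃ atTop (𝓝 μ₃)) (hμ₂ : L ≠ μ₂) (hμ₃ : L ≠ μ₃) :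
    Tendsto (fun t => t * (L - Λ₁ t)) atTop (𝓝 (c / ((L - μ₂) * (L - μ₃)))) := by
  have hQ := (tendsto_const_nhds (x := L)).sub h₂ |>.mul ((tendsto_const_nhds (x := L)).sub h₃)
  have hQ0 : (L - μ₂) * (L - μ₃) ≠ 0 := mul_ne_zero (sub_ne_zero.2 hμ₂) (sub_ne_zero.2 hμ₃)
  refine (hc.div hQ hQ0).congr' ?_
  filter_upwards [hf, hQ.eventually_ne hQ0] with t hft hQt
  rw [Pi.div_apply, hft, mul_assoc (L - Λ₁ t), ← mul_assoc t, mul_div_cancel_right₀ _ hQt]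

section Symbols

variable {d₂ : ℝ} (g γ₂ : ℝ)

lemma tendsto_m12_div_self {Λ : ℝ → ℝ} {L : ℝ} (hd₂ : 0 < d₂) (hΛ : Tendsto Λ atTop (𝓝 L)) :
    Tendsto (fun t => m12 d₂ g γ₂ t (Λ t) / t) atTop (𝓝 (-2 * L ^ 2)) := by
  have hlim := (((hΛ.const_mul γ₂).const_add g).mul tendsto_inv_atTop_zero).sub
    ((hΛ.pow 2).div (tendsto_tanh_mul_atTop hd₂) one_ne_zero) |>.const_mul 2
  refine (hlim.congr' ?_).trans (by ring_nf; rfl)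
  filter_upwards [eventually_ne_atTop 0] with t ht
  simp only [m12, Pi.div_apply]
  field_simp

lemma tendsto_m12_div_m11_div_mul_sinh {Λ : ℝ → ℝ} {κ : ℝ} (hd₂ : 0 < d₂) (hγd : γ₂ * d₂ ≠ 0)
    (hΛ : Tendsto Λ atTop (𝓝 (γ₂ * d₂)))
    (hκ : Tendsto (fun t => t * (γ₂ * d₂ - Λ t)) atTop (𝓝 κ)) (hκ0 : κ ≠ 0) :
    Tendsto (fun t => m12 d₂ g γ₂ t (Λ t) / m11 d₂ γ₂ t (Λ t) / (t * sinh (t * d₂))) atTop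
      (𝓝 (γ₂ * d₂ / κ)) := by
  have hden := (hΛ.const_mul (-2)).mul hκ
  have hlim := (tendsto_m12_div_self g γ₂ hd₂ hΛ).div hden
    (mul_ne_zero (mul_ne_zero (by norm_num) hγd) hκ0)
  refine (hlim.congr' ?_).trans (by field_simp; ring_nf; rfl)
  filter_upwards [eventually_gt_atTop 0] with t ht
  have hs : sinh (t * d₂) ≠ 0 := (sinh_pos_iff.2 (mul_pos ht hd₂)).ne'
  have hden_eq : -2 * Λ t * (γ₂ * d₂ - Λ t) * t / sinh (t * d₂) * (t * sinh (t * d₂)) =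
      t * (-2 * Λ t * (t * (γ₂ * d₂ - Λ t))) := by
    field_simp
  rw [m11, div_div _ _ (t * _), hden_eq, Pi.div_apply, div_div]

end Symbols

theorem ratio_m12_m11_diverges_general
    (d₁ d₂ g γ₁ γ₂ : ℝ) (hd₁ : 0 < d₁) (hd₂ : 0 < d₂)
    (hγ₂ : 0 < γ₂) (hne : γ₁ ≠ γ₂) (Λ₁ Λ₂ Λ₃ : ℝ → ℝ)
    (hroots : ∀ᶠ t in atTop,
      Λ₃ t < Λ₂ t ∧ Λ₂ t < Λ₁ t ∧
      ∀ Λ : ℝ, phi d₁ d₂ g γ₁ γ₂ t Λ = (Λ - Λ₁ t) * (Λ - Λ₂ t) * (Λ - Λ₃ t))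
    (hlim1 : Tendsto Λ₁ atTop (nhds (γ₂ * d₂)))
    (hlim2 : Tendsto Λ₂ atTop (nhds 0))
    (hlim3 : Tendsto Λ₃ atTop (nhds 0)) :
    (γ₁ < γ₂ →
      Tendsto (fun t : ℝ => m12 d₂ g γ₂ t (Λ₁ t) / m11 d₂ γ₂ t (Λ₁ t)) atTop atTop) ∧
    (γ₂ < γ₁ →
      Tendsto (fun t : ℝ => m12 d₂ g γ₂ t (Λ₁ t) / m11 d₂ γ₂ t (Λ₁ t)) atTop atBot) := by
  have hL : 0 < γ₂ * d₂ := mul_pos hγ₂ hd₂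
  have hgap : Tendsto (fun t => t * (γ₂ * d₂ - Λ₁ t)) atTop (𝓝 ((γ₂ - γ₁) / 2)) := by
    convert tendsto_mul_sub_of_eq_mul_mul (hroots.mono fun t ht => ht.2.2 (γ₂ * d₂))
      (tendsto_mul_phi g γ₁ γ₂ hd₁ hd₂) hlim2 hlim3 hL.ne' hL.ne' using 2
    rw [sub_zero]
    field_simp
  have hratio := tendsto_m12_div_m11_div_mul_sinh g γ₂ hd₂ hL.ne' hlim1 hgap
    (div_ne_zero (sub_ne_zero.2 hne.symm) two_ne_zero)
  have hgrowth : Tendsto (fun t => t * sinh (t * d₂)) atTop atTop :=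
    tendsto_id.atTop_mul_atTop₀ (tendsto_sinh_atTop.comp (tendsto_id.atTop_mul_const hd₂))
  have hfactor : (fun t => m12 d₂ g γ₂ t (Λ₁ t) / m11 d₂ γ₂ t (Λ₁ t) / (t * sinh (t * d₂)) *
      (t * sinh (t * d₂))) =ᶠ[atTop] fun t => m12 d₂ g γ₂ t (Λ₁ t) / m11 d₂ γ₂ t (Λ₁ t) := by
    filter_upwards [eventually_gt_atTop 0] with t ht
    exact div_mul_cancel₀ _ (mul_pos ht (sinh_pos_iff.2 (mul_pos ht hd₂))).ne'
  constructor
  · intro h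
    exact (hratio.pos_mul_atTop (div_pos hL (by linarith)) hgrowth).congr' hfactor
  · intro h
    exact (hratio.neg_mul_atTop (div_neg_of_pos_of_neg hL (by linarith)) hgrowth).congr' hfactor

/-- along the largest root `Λ₁`, the ratio `m¹²/m¹¹` diverges to
`+∞` if `γ₂ > γ₁` and to `−∞` if `γ₂ < γ₁`. -/
theorem ratio_m12_m11_diverges
    (d₁ d₂ g γ₁ γ₂ : ℝ) (hd₁ : 0 < d₁) (hd₂ : 0 < d₂) (hg : 0 < g)
    (hγ₂ : 0 < γ₂) (hne : γ₁ ≠ γ₂) (Λ₁ Λ₂ Λ₃ : ℝ → ℝ)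
    (hroots : ∀ᶠ t in atTop,
      Λ₃ t < Λ₂ t ∧ Λ₂ t < Λ₁ t ∧
      ∀ Λ : ℝ, phi d₁ d₂ g γ₁ γ₂ t Λ = (Λ - Λ₁ t) * (Λ - Λ₂ t) * (Λ - Λ₃ t))
    (hlim1 : Tendsto Λ₁ atTop (nhds (γ₂ * d₂)))
    (hlim2 : Tendsto Λ₂ atTop (nhds 0))
    (hlim3 : Tendsto Λ₃ atTop (nhds 0)) :
    (γ₁ < γ₂ →
      Tendsto (fun t : ℝ => m12 d₂ g γ₂ t (Λ₁ t) / m11 d₂ γ₂ t (Λ₁ t)) atTop atTop) ∧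
    (γ₂ < γ₁ →
      Tendsto (fun t : ℝ => m12 d₂ g γ₂ t (Λ₁ t) / m11 d₂ γ₂ t (Λ₁ t)) atTop atBot) :=
  ratio_m12_m11_diverges_general d₁ d₂ g γ₁ γ₂ hd₁ hd₂ hγ₂ hne Λ₁ Λ₂ Λ₃ hroots hlim1 hlim2 hlim3
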